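/- arXiv:2510.03883 — 2 statements merged into one kernel-verified Lean document; each statement's English description precedes it below -/
import Mathlib

section
/- The polynomial function f : ℝ² → ℝ given by f(x,y) = x·(x − y² + 1)·(x + y² + 3) has only nondegenerate critical points, and it has exactly four critical points, of which exactly one is a local minimum, exactly three are saddles, and none is a local maximum. -/
/-- A point `p = (x₀, y₀)` is a critical point of `f : ℝ → ℝ → ℝ` if both
partial derivatives of `f` vanish at `p`. -/
def IsCriticalPt (f : ℝ → ℝ → ℝ) (p : ℝ × ℝ) : Prop :=
  deriv (fun t => f t p.2) p.1 = 0 ∧ deriv (fun t => f p.1 t) p.2 = 0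

/-- The Hessian determinant `f_xx(p) * f_yy(p) - f_xy(p)^2` of `f` at `p`. -/
noncomputable def hessDet (f : ℝ → ℝ → ℝ) (p : ℝ × ℝ) : ℝ :=
  deriv (fun x => deriv (fun t => f t p.2) x) p.1 *
      deriv (fun y => deriv (fun t => f p.1 t) y) p.2 -
    (deriv (fun y => deriv (fun t => f t y) p.1) p.2) ^ 2

/-- `p` is a local minimum point of the function `(x, y) ↦ f x y`. -/
def IsLocMin (f : ℝ → ℝ → ℝ) (p : ℝ × ℝ) : Prop :=
  IsLocalMin (fun q : ℝ × ℝ => f q.1 q.2) p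

/-- `p` is a local maximum point of the function `(x, y) ↦ f x y`. -/
def IsLocMax (f : ℝ → ℝ → ℝ) (p : ℝ × ℝ) : Prop :=
  IsLocalMax (fun q : ℝ × ℝ => f q.1 q.2) p

/-- A saddle is a critical point that is neither a local minimum
nor a local maximum. -/
def IsSaddle (f : ℝ → ℝ → ℝ) (p : ℝ × ℝ) : Prop :=
  IsCriticalPt f p ∧ ¬ IsLocMin f p ∧ ¬ IsLocMax f p

/-- Realizing polynomial (J₁₀³, four critical points, no maxima). -/
noncomputable def f17 : ℝ → ℝ → ℝ := fun x y => x * (x - y ^ 2 + 1) * (x + y ^ 2 + 3)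

/- ### auxiliary material -/

lemma s7_sq : Real.sqrt 7 ^ 2 = 7 := Real.sq_sqrt (by norm_num)

lemma s7_gt : 2 < Real.sqrt 7 := by
  nlinarith [s7_sq, Real.sqrt_nonneg 7]

lemma s7_lt : Real.sqrt 7 < 3 := by
  nlinarith [s7_sq, Real.sqrt_nonneg 7]

lemma hdx (x y : ℝ) : HasDerivAt (fun t => f17 t y) (3*x^2+8*x+3-y^4-2*y^2) x := by
  have h1 : HasDerivAt (fun t:ℝ => t) 1 x := hasDerivAt_id x
  have h2 : HasDerivAt (fun t:ℝ => t - y^2 + 1) 1 x := by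
    simpa using (h1.sub_const (y^2)).add_const 1
  have h3 : HasDerivAt (fun t:ℝ => t + y^2 + 3) 1 x := by
    simpa using (h1.add_const (y^2)).add_const 3
  have h := (h1.mul h2).mul h3
  simp only [f17]; exact h.congr_deriv (by simp only [Pi.mul_apply]; ring)

lemma hdy (x y : ℝ) : HasDerivAt (fun t => f17 x t) (-4*x*y^3-4*x*y) y := by
  have hp : HasDerivAt (fun t:ℝ => t^2) (2*y) y := by simpa using hasDerivAt_pow 2 y
  have h1 : HasDerivAt (fun t:ℝ => (x:ℝ)) 0 y := hasDerivAt_const y x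
  have h2 : HasDerivAt (fun t:ℝ => x - t^2 + 1) (-(2*y)) y := by
    simpa using (hp.const_sub x).add_const 1
  have h3 : HasDerivAt (fun t:ℝ => x + t^2 + 3) (2*y) y := by
    simpa using (hp.const_add x).add_const 3
  have h := (h1.mul h2).mul h3
  simp only [f17]; exact h.congr_deriv (by simp only [Pi.mul_apply]; ring)

lemma dx (x y : ℝ) : deriv (fun t => f17 t y) x = 3*x^2+8*x+3-y^4-2*y^2 := (hdx x y).deriv

lemma dy (x y : ℝ) : deriv (fun t => f17 x t) y = -4*x*y^3-4*x*y := (hdy x y).deriv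

lemma crit_iff (x y : ℝ) : IsCriticalPt f17 (x, y) ↔
    (3*x^2+8*x+3-y^4-2*y^2 = 0 ∧ x*y*(y^2+1) = 0) := by
  unfold IsCriticalPt
  rw [dx, dy]
  constructor
  · rintro ⟨h1, h2⟩; exact ⟨h1, by nlinarith [h2]⟩
  · rintro ⟨h1, h2⟩; exact ⟨h1, by nlinarith [h2]⟩

lemma hess_eq (x y : ℝ) : hessDet f17 (x, y) = (6*x+8)*(-12*x*y^2-4*x) - (-4*y^3-4*y)^2 := by
  unfold hessDet
  have e1 : (fun x' => deriv (fun t => f17 t (x,y).2) x') = fun x' => 3*x'^2+8*x'+3-y^4-2*y^2 :=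
    funext fun x' => dx x' y
  have e2 : (fun y' => deriv (fun t => f17 (x,y).1 t) y') = fun y' => -4*x*y'^3-4*x*y' :=
    funext fun y' => dy x y'
  have e3 : (fun y' => deriv (fun t => f17 t y') (x,y).1) = fun y' => 3*x^2+8*x+3-y'^4-2*y'^2 :=
    funext fun y' => dx x y'
  rw [e1, e2, e3]
  have d1 : deriv (fun x' : ℝ => 3*x'^2+8*x'+3-y^4-2*y^2) x = 6*x+8 := by
    have h : HasDerivAt (fun x' : ℝ => 3*x'^2+8*x'+3-y^4-2*y^2) (6*x+8) x := by
      have hp : HasDerivAt (fun t:ℝ => t^2) (2*x) x := by simpa using hasDerivAt_pow 2 x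
      have := (((hp.const_mul 3).add ((hasDerivAt_id x).const_mul 8)).add_const (3-y^4-2*y^2))
      refine (this.congr_deriv (by ring)).congr_of_eventuallyEq (Filter.Eventually.of_forall fun t => ?_)
      simp only [Pi.add_apply, id_eq]; ring
    exact h.deriv
  have d2 : deriv (fun y' : ℝ => -4*x*y'^3-4*x*y') y = -12*x*y^2-4*x := by
    have h : HasDerivAt (fun y' : ℝ => -4*x*y'^3-4*x*y') (-12*x*y^2-4*x) y := by
      have hp : HasDerivAt (fun t:ℝ => t^3) (3*y^2) y := by simpa using hasDerivAt_pow 3 y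
      have := (hp.const_mul (-4*x)).add ((hasDerivAt_id y).const_mul (-4*x))
      refine (this.congr_deriv (by ring)).congr_of_eventuallyEq (Filter.Eventually.of_forall fun t => ?_)
      simp only [Pi.add_apply, id_eq]; ring
    exact h.deriv
  have d3 : deriv (fun y' : ℝ => 3*x^2+8*x+3-y'^4-2*y'^2) y = -4*y^3-4*y := by
    have h : HasDerivAt (fun y' : ℝ => 3*x^2+8*x+3-y'^4-2*y'^2) (-4*y^3-4*y) y := by
      have hp4 : HasDerivAt (fun t:ℝ => t^4) (4*y^3) y := by simpa using hasDerivAt_pow 4 y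
      have hp2 : HasDerivAt (fun t:ℝ => t^2) (2*y) y := by simpa using hasDerivAt_pow 2 y
      have := ((hp4.const_sub (3*x^2+8*x+3)).sub (hp2.const_mul 2))
      exact this.congr_deriv (by ring)
    exact h.deriv
  rw [d1, d2, d3]

/-- The four critical points. -/
noncomputable def pA : ℝ × ℝ := ((Real.sqrt 7 - 4)/3, 0)
noncomputable def pB : ℝ × ℝ := ((-Real.sqrt 7 - 4)/3, 0)
noncomputable def pP : ℝ × ℝ := (0, 1)
noncomputable def pQ : ℝ × ℝ := (0, -1)

lemma crit_set_eq : {p : ℝ × ℝ | IsCriticalPt f17 p} = {pA, pP, pQ, pB} := by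
  have hs := s7_sq
  have h2 := s7_gt
  ext ⟨x, y⟩
  simp only [Set.mem_setOf_eq, crit_iff, Set.mem_insert_iff, Set.mem_singleton_iff,
    pA, pB, pP, pQ, Prod.mk.injEq]
  constructor
  · rintro ⟨h1, hz⟩
    have hy1 : (0:ℝ) < y^2 + 1 := by positivity
    have hxy : x * y = 0 := by
      rcases mul_eq_zero.1 hz with h | h
      · exact h
      · exact absurd h (by positivity)
    rcases mul_eq_zero.1 hxy with rfl | rfl
    · -- x = 0 : y = ±1
      have : (y - 1) * (y + 1) * (y^2 + 3) = 0 := by linear_combination -h1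
      have hy3 : (0:ℝ) < y^2 + 3 := by positivity
      rcases mul_eq_zero.1 this with h | h
      · rcases mul_eq_zero.1 h with h | h
        · right; left; constructor <;> [rfl; linarith]
        · right; right; left; constructor <;> [rfl; linarith]
      · exact absurd h (by positivity)
    · -- y = 0 : x = a or b
      have : (x - (Real.sqrt 7 - 4)/3) * (x - (-Real.sqrt 7 - 4)/3) = 0 := by
        linear_combination h1/3 - hs/9
      rcases mul_eq_zero.1 this with h | h
      · left; constructor <;> [linarith; rfl]
      · right; right; right; constructor <;> [linarith; rfl]
  · rintro (⟨rfl, rfl⟩ | ⟨rfl, rfl⟩ | ⟨rfl, rfl⟩ | ⟨rfl, rfl⟩)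
    · exact ⟨by linear_combination hs/3, by ring⟩
    · exact ⟨by norm_num, by ring⟩
    · exact ⟨by norm_num, by ring⟩
    · exact ⟨by linear_combination hs/3, by ring⟩

/- ### curve helpers -/

lemma not_min_of_curve {f : ℝ × ℝ → ℝ} {p : ℝ × ℝ} (γ : ℝ → ℝ × ℝ)
    (hc : ContinuousAt γ 0) (h0 : γ 0 = p)
    (hlt : ∀ t : ℝ, 0 < t → t < 1 → f (γ t) < f p) : ¬ IsLocalMin f p := by
  intro h
  have hT : Filter.Tendsto γ (nhdsWithin 0 (Set.Ioi 0)) (nhds p) := by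
    rw [← h0]; exact hc.tendsto.mono_left nhdsWithin_le_nhds
  have h2 : ∀ᶠ t in nhdsWithin (0:ℝ) (Set.Ioi 0), f p ≤ f (γ t) :=
    hT.eventually (h : ∀ᶠ q in nhds p, f p ≤ f q)
  have h3 : ∀ᶠ t in nhdsWithin (0:ℝ) (Set.Ioi 0), f (γ t) < f p := by
    filter_upwards [Ioo_mem_nhdsGT_of_mem (Set.mem_Ico.2 ⟨le_refl 0, one_pos⟩)] with t ht
    exact hlt t ht.1 ht.2
  obtain ⟨t, h4, h5⟩ := (h2.and h3).exists
  linarith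

lemma not_max_of_curve {f : ℝ × ℝ → ℝ} {p : ℝ × ℝ} (γ : ℝ → ℝ × ℝ)
    (hc : ContinuousAt γ 0) (h0 : γ 0 = p)
    (hgt : ∀ t : ℝ, 0 < t → t < 1 → f p < f (γ t)) : ¬ IsLocalMax f p := by
  intro h
  have hT : Filter.Tendsto γ (nhdsWithin 0 (Set.Ioi 0)) (nhds p) := by
    rw [← h0]; exact hc.tendsto.mono_left nhdsWithin_le_nhds
  have h2 : ∀ᶠ t in nhdsWithin (0:ℝ) (Set.Ioi 0), f (γ t) ≤ f p :=
    hT.eventually (h : ∀ᶠ q in nhds p, f q ≤ f p)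
  have h3 : ∀ᶠ t in nhdsWithin (0:ℝ) (Set.Ioi 0), f p < f (γ t) := by
    filter_upwards [Ioo_mem_nhdsGT_of_mem (Set.mem_Ico.2 ⟨le_refl 0, one_pos⟩)] with t ht
    exact hgt t ht.1 ht.2
  obtain ⟨t, h4, h5⟩ := (h2.and h3).exists
  linarith

/- ### local extremum facts at the four points -/

lemma locmin_A : IsLocMin f17 pA := by
  have hs := s7_sq
  have h2 := s7_gt
  have h3 := s7_lt
  unfold IsLocMin
  refine Metric.eventually_nhds_iff.2 ⟨1/10, by norm_num, fun q hq => ?_⟩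
  obtain ⟨x, y⟩ := q
  have hd1 : |x - (Real.sqrt 7 - 4)/3| < 1/10 := by
    rw [Prod.dist_eq] at hq
    have h := lt_of_le_of_lt (le_max_left (dist (x,y).1 pA.1) (dist (x,y).2 pA.2)) hq
    simp only [pA] at h
    rwa [Real.dist_eq] at h
  rw [abs_lt] at hd1
  simp only [pA]
  set s := Real.sqrt 7 with hsdef
  have hid : f17 x y - f17 ((s-4)/3) 0 =
      (s + (x - (s-4)/3))*(x - (s-4)/3)^2 + (-x)*(y^2*(y^2+2)) := by
    simp only [f17]
    linear_combination (-s/9 + x/3 + 4/9) * hs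
  have t1 : 0 ≤ (s + (x - (s-4)/3))*(x - (s-4)/3)^2 :=
    mul_nonneg (by linarith [hd1.1]) (sq_nonneg _)
  have hxneg : x < 0 := by linarith [hd1.2]
  have t2 : 0 ≤ (-x)*(y^2*(y^2+2)) := mul_nonneg (by linarith) (by positivity)
  linarith [hid, t1, t2]

lemma notmax_A : ¬ IsLocMax f17 pA := by
  have hs := s7_sq
  have h2 := s7_gt
  unfold IsLocMax
  apply not_max_of_curve (fun t => ((Real.sqrt 7 - 4)/3 + t, 0))
  · fun_prop
  · simp [pA]
  · intro t ht ht1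
    simp only [pA]
    set s := Real.sqrt 7 with hsdef
    have hid : f17 ((s-4)/3 + t) 0 - f17 ((s-4)/3) 0 = t^2*(t + s) := by
      simp only [f17]
      linear_combination (t/3) * hs
    nlinarith [mul_pos (mul_pos ht ht) (show (0:ℝ) < t + s by linarith)]

lemma notmin_B : ¬ IsLocMin f17 pB := by
  have hs := s7_sq
  have h2 := s7_gt
  unfold IsLocMin
  apply not_min_of_curve (fun t => ((-Real.sqrt 7 - 4)/3 + t, 0))
  · fun_prop
  · simp [pB]
  · intro t ht ht1
    simp only [pB]
    set s := Real.sqrt 7 with hsdef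
    have hid : f17 ((-s-4)/3 + t) 0 - f17 ((-s-4)/3) 0 = t^2*(t - s) := by
      simp only [f17]
      linear_combination (t/3) * hs
    nlinarith [mul_pos (mul_pos ht ht) (show (0:ℝ) < s - t by linarith)]

lemma notmax_B : ¬ IsLocMax f17 pB := by
  have hs := s7_sq
  have h2 := s7_gt
  unfold IsLocMax
  apply not_max_of_curve (fun t => ((-Real.sqrt 7 - 4)/3, t))
  · fun_prop
  · simp [pB]
  · intro t ht ht1
    simp only [pB]
    set s := Real.sqrt 7 with hsdef
    have hid : f17 ((-s-4)/3) t - f17 ((-s-4)/3) 0 = ((s+4)/3)*(t^2*(t^2+2)) := by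
      simp only [f17]; ring
    nlinarith [mul_pos (mul_pos ht ht) (show (0:ℝ) < t^2 + 2 by positivity)]

lemma notmin_P : ¬ IsLocMin f17 pP := by
  unfold IsLocMin
  apply not_min_of_curve (fun t => (t, 1 + t))
  · fun_prop
  · simp [pP]
  · intro t ht ht1
    simp only [pP]
    have h1 : f17 t (1+t) = -(t^2*(1+t)*(t^2+3*t+4)) := by simp only [f17]; ring
    have h2 : f17 0 1 = 0 := by simp [f17]
    rw [h1, h2]
    have : 0 < t^2*(1+t)*(t^2+3*t+4) := by positivity
    linarith

lemma notmax_P : ¬ IsLocMax f17 pP := by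
  unfold IsLocMax
  apply not_max_of_curve (fun t => (t, 1))
  · fun_prop
  · simp [pP]
  · intro t ht ht1
    simp only [pP]
    have h1 : f17 t 1 = t^2*(t+4) := by simp only [f17]; ring
    have h2 : f17 0 1 = 0 := by simp [f17]
    rw [h1, h2]
    positivity

lemma notmin_Q : ¬ IsLocMin f17 pQ := by
  unfold IsLocMin
  apply not_min_of_curve (fun t => (t, -1 - t))
  · fun_prop
  · simp [pQ]
  · intro t ht ht1
    simp only [pQ]
    have h1 : f17 t (-1-t) = -(t^2*(1+t)*(t^2+3*t+4)) := by simp only [f17]; ring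
    have h2 : f17 0 (-1) = 0 := by simp [f17]
    rw [h1, h2]
    have : 0 < t^2*(1+t)*(t^2+3*t+4) := by positivity
    linarith

lemma notmax_Q : ¬ IsLocMax f17 pQ := by
  unfold IsLocMax
  apply not_max_of_curve (fun t => (t, -1))
  · fun_prop
  · simp [pQ]
  · intro t ht ht1
    simp only [pQ]
    have h1 : f17 t (-1) = t^2*(t+4) := by simp only [f17]; ring
    have h2 : f17 0 (-1) = 0 := by simp [f17]
    rw [h1, h2]
    positivity

lemma critA : IsCriticalPt f17 pA :=
  (Set.ext_iff.1 crit_set_eq pA).2 (by simp)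
lemma critB : IsCriticalPt f17 pB :=
  (Set.ext_iff.1 crit_set_eq pB).2 (by simp)
lemma critP : IsCriticalPt f17 pP :=
  (Set.ext_iff.1 crit_set_eq pP).2 (by simp)
lemma critQ : IsCriticalPt f17 pQ :=
  (Set.ext_iff.1 crit_set_eq pQ).2 (by simp)

lemma neAP : pA ≠ pP := by
  intro h; have := congrArg Prod.snd h; norm_num [pA, pP] at this
lemma neAQ : pA ≠ pQ := by
  intro h; have := congrArg Prod.snd h; norm_num [pA, pQ] at this
lemma neAB : pA ≠ pB := by
  intro h; have := congrArg Prod.fst h; simp only [pA, pB] at this; nlinarith [s7_gt]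
lemma nePQ : pP ≠ pQ := by
  intro h; have := congrArg Prod.snd h; norm_num [pP, pQ] at this
lemma nePB : pP ≠ pB := by
  intro h; have := congrArg Prod.snd h; norm_num [pP, pB] at this
lemma neQB : pQ ≠ pB := by
  intro h; have := congrArg Prod.snd h; norm_num [pQ, pB] at this

lemma minset_eq : {p : ℝ × ℝ | IsCriticalPt f17 p ∧ IsLocMin f17 p} = {pA} := by
  ext p
  simp only [Set.mem_setOf_eq, Set.mem_singleton_iff]
  constructor
  · rintro ⟨hc, hm⟩
    have hmem : p ∈ ({pA, pP, pQ, pB} : Set (ℝ × ℝ)) := (Set.ext_iff.1 crit_set_eq p).1 hc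
    simp only [Set.mem_insert_iff, Set.mem_singleton_iff] at hmem
    rcases hmem with rfl | rfl | rfl | rfl
    · rfl
    · exact absurd hm notmin_P
    · exact absurd hm notmin_Q
    · exact absurd hm notmin_B
  · rintro rfl; exact ⟨critA, locmin_A⟩

lemma saddleset_eq : {p : ℝ × ℝ | IsSaddle f17 p} = {pP, pQ, pB} := by
  ext p
  simp only [Set.mem_setOf_eq, Set.mem_insert_iff, Set.mem_singleton_iff]
  constructor
  · rintro ⟨hc, hm, hM⟩
    have hmem : p ∈ ({pA, pP, pQ, pB} : Set (ℝ × ℝ)) := (Set.ext_iff.1 crit_set_eq p).1 hc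
    simp only [Set.mem_insert_iff, Set.mem_singleton_iff] at hmem
    rcases hmem with rfl | rfl | rfl | rfl
    · exact absurd locmin_A hm
    · exact Or.inl rfl
    · exact Or.inr (Or.inl rfl)
    · exact Or.inr (Or.inr rfl)
  · rintro (rfl | rfl | rfl)
    · exact ⟨critP, notmin_P, notmax_P⟩
    · exact ⟨critQ, notmin_Q, notmax_Q⟩
    · exact ⟨critB, notmin_B, notmax_B⟩


/-- The polynomial `f17` has only nondegenerate critical points; it has exactly
4 critical points, of which exactly 1 are local minima, exactly 3 are
saddles, and none is a local maximum. -/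
theorem morse_data_f17 :
    (∀ p : ℝ × ℝ, IsCriticalPt f17 p → hessDet f17 p ≠ 0) ∧
    {p : ℝ × ℝ | IsCriticalPt f17 p}.Finite ∧
    {p : ℝ × ℝ | IsCriticalPt f17 p}.ncard = 4 ∧
    {p : ℝ × ℝ | IsCriticalPt f17 p ∧ IsLocMin f17 p}.ncard = 1 ∧
    {p : ℝ × ℝ | IsSaddle f17 p}.ncard = 3 ∧
    (∀ p : ℝ × ℝ, IsCriticalPt f17 p → ¬ IsLocMax f17 p) := by
  have hs := s7_sq
  have h2 := s7_gt
  have h3 := s7_lt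
  refine ⟨?_, ?_, ?_, ?_, ?_, ?_⟩
  · -- nondegenerate
    intro p hp
    have hmem : p ∈ ({pA, pP, pQ, pB} : Set (ℝ × ℝ)) := (Set.ext_iff.1 crit_set_eq p).1 hp
    simp only [Set.mem_insert_iff, Set.mem_singleton_iff] at hmem
    rcases hmem with rfl | rfl | rfl | rfl
    · simp only [pA]; rw [hess_eq]; intro hcon; nlinarith
    · simp only [pP]; rw [hess_eq]; intro hcon; norm_num at hcon
    · simp only [pQ]; rw [hess_eq]; intro hcon; norm_num at hcon
    · simp only [pB]; rw [hess_eq]; intro hcon; nlinarith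
  · rw [crit_set_eq]
    exact (((Set.finite_singleton pB).insert pQ).insert pP).insert pA
  · rw [crit_set_eq]
    rw [Set.ncard_insert_of_notMem (by simp [neAP, neAQ, neAB])
        (((Set.finite_singleton pB).insert pQ).insert pP),
      Set.ncard_insert_of_notMem (by simp [nePQ, nePB]) ((Set.finite_singleton pB).insert pQ),
      Set.ncard_pair neQB]
  · rw [minset_eq, Set.ncard_singleton]
  · rw [saddleset_eq,
      Set.ncard_insert_of_notMem (by simp [nePQ, nePB]) ((Set.finite_singleton pB).insert pQ),
      Set.ncard_pair neQB]
  · intro p hp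
    have hmem : p ∈ ({pA, pP, pQ, pB} : Set (ℝ × ℝ)) := (Set.ext_iff.1 crit_set_eq p).1 hp
    simp only [Set.mem_insert_iff, Set.mem_singleton_iff] at hmem
    rcases hmem with rfl | rfl | rfl | rfl
    · exact notmax_A
    · exact notmax_P
    · exact notmax_Q
    · exact notmax_B
end

section
/- The polynomial function f : ℝ² → ℝ given by f(x,y) = x·(x − y² − 1)·(x + y² + 1) has only nondegenerate critical points, and it has exactly two critical points, namely (1/√3, 0) and (−1/√3, 0), and both are saddles (neither a local minimum nor a local maximum). -/
/-- The realizing polynomial `x(x − y² − 1)(x + y² + 1)` for the `Φ₃` class with two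
real critical points. -/
noncomputable def f19 : ℝ → ℝ → ℝ := fun x y => x * (x - y ^ 2 - 1) * (x + y ^ 2 + 1)

lemma fx_deriv (y x : ℝ) : deriv (fun t => f19 t y) x = 3 * x ^ 2 - (y ^ 2 + 1) ^ 2 := by
  have h : (fun t => f19 t y) = fun t => t ^ 3 - (y ^ 2 + 1) ^ 2 * t := by
    funext t; simp only [f19]; ring
  rw [h]
  have h1 : HasDerivAt (fun t : ℝ => t ^ 3 - (y ^ 2 + 1) ^ 2 * t)
      (3 * x ^ 2 - (y ^ 2 + 1) ^ 2) x := by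
    have := (hasDerivAt_pow 3 x).sub ((hasDerivAt_id x).const_mul ((y ^ 2 + 1) ^ 2))
    refine this.congr_deriv ?_; push_cast; ring
  exact h1.deriv

lemma fy_deriv (x y : ℝ) : deriv (fun t => f19 x t) y = -(4 * x * y * (y ^ 2 + 1)) := by
  have h : (fun t => f19 x t) = fun t => x ^ 3 - x * (t ^ 2 + 1) ^ 2 := by
    funext t; simp only [f19]; ring
  rw [h]
  have h1 : HasDerivAt (fun t : ℝ => x ^ 3 - x * (t ^ 2 + 1) ^ 2)
      (-(4 * x * y * (y ^ 2 + 1))) y := by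
    have := ((((hasDerivAt_pow 2 y).add_const 1).pow 2).const_mul x).const_sub (x ^ 3)
    refine this.congr_deriv ?_; push_cast; ring
  exact h1.deriv

lemma fxx_deriv (y x : ℝ) :
    deriv (fun s => deriv (fun t => f19 t y) s) x = 6 * x := by
  have h : (fun s => deriv (fun t => f19 t y) s) = fun s : ℝ => 3 * s ^ 2 - (y ^ 2 + 1) ^ 2 := by
    funext s; exact fx_deriv y s
  rw [h]
  have h1 : HasDerivAt (fun s : ℝ => 3 * s ^ 2 - (y ^ 2 + 1) ^ 2) (6 * x) x := by
    have := ((hasDerivAt_pow 2 x).const_mul 3).sub_const ((y ^ 2 + 1) ^ 2)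
    refine this.congr_deriv ?_; push_cast; ring
  exact h1.deriv

lemma fyy_deriv (x y : ℝ) :
    deriv (fun s => deriv (fun t => f19 x t) s) y = -(4 * x * (3 * y ^ 2 + 1)) := by
  have h : (fun s => deriv (fun t => f19 x t) s) = fun s : ℝ => -(4 * x) * (s ^ 3 + s) := by
    funext s; rw [fy_deriv]; ring
  rw [h]
  have h1 : HasDerivAt (fun s : ℝ => -(4 * x) * (s ^ 3 + s))
      (-(4 * x * (3 * y ^ 2 + 1))) y := by
    have := ((hasDerivAt_pow 3 y).add (hasDerivAt_id y)).const_mul (-(4 * x))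
    refine this.congr_deriv ?_; push_cast; ring
  exact h1.deriv

lemma fxy_deriv (x y : ℝ) :
    deriv (fun s => deriv (fun t => f19 t s) x) y = -(4 * y * (y ^ 2 + 1)) := by
  have h : (fun s => deriv (fun t => f19 t s) x) = fun s : ℝ => 3 * x ^ 2 - (s ^ 2 + 1) ^ 2 := by
    funext s; exact fx_deriv s x
  rw [h]
  have h1 : HasDerivAt (fun s : ℝ => 3 * x ^ 2 - (s ^ 2 + 1) ^ 2)
      (-(4 * y * (y ^ 2 + 1))) y := by
    have := (((hasDerivAt_pow 2 y).add_const 1).pow 2).const_sub (3 * x ^ 2)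
    refine this.congr_deriv ?_; push_cast; ring
  exact h1.deriv

lemma sqrt3_sq : Real.sqrt 3 ^ 2 = 3 := Real.sq_sqrt (by norm_num)

lemma c_sq : (1 / Real.sqrt 3) ^ 2 = 1 / 3 := by
  rw [div_pow, sqrt3_sq]; norm_num

lemma c_pos : 0 < 1 / Real.sqrt 3 := by positivity

lemma crit_iff_s19 (p : ℝ × ℝ) :
    IsCriticalPt f19 p ↔ (3 * p.1 ^ 2 = (p.2 ^ 2 + 1) ^ 2 ∧ p.1 * p.2 = 0) := by
  unfold IsCriticalPt
  rw [fx_deriv, fy_deriv]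
  constructor
  · rintro ⟨h1, h2⟩
    constructor
    · linarith
    · have hy : (0:ℝ) < p.2 ^ 2 + 1 := by positivity
      have : 4 * (p.1 * p.2) * (p.2 ^ 2 + 1) = 0 := by linarith
      have := mul_eq_zero.mp this
      rcases this with h | h
      · rcases mul_eq_zero.mp h with h | h
        · norm_num at h
        · exact h
      · linarith
  · rintro ⟨h1, h2⟩
    constructor
    · linarith
    · have : p.1 * p.2 * (4 * (p.2 ^ 2 + 1)) = 0 := by rw [h2]; ring
      linarith [this]

lemma crit_set :
    {p : ℝ × ℝ | IsCriticalPt f19 p} =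
      {(1 / Real.sqrt 3, 0), (-(1 / Real.sqrt 3), 0)} := by
  ext p
  simp only [Set.mem_setOf_eq, Set.mem_insert_iff, Set.mem_singleton_iff, crit_iff_s19, Prod.ext_iff]
  constructor
  · rintro ⟨h1, h2⟩
    rcases mul_eq_zero.mp h2 with hx | hy
    · exfalso; rw [hx] at h1; nlinarith [sq_nonneg (p.2 ^ 2)]
    · rw [hy] at h1
      have hc : (1 / Real.sqrt 3) ^ 2 = 1 / 3 := c_sq
      have hfac : (p.1 - 1 / Real.sqrt 3) * (p.1 + 1 / Real.sqrt 3) = 0 := by nlinarith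
      rcases mul_eq_zero.mp hfac with h | h
      · left; exact ⟨by linarith, hy⟩
      · right; exact ⟨by linarith, hy⟩
  · rintro (⟨hx, hy⟩ | ⟨hx, hy⟩) <;>
    · rw [hx, hy]
      constructor
      · nlinarith [c_sq]
      · ring

lemma f19_eval (x y : ℝ) : f19 x y = x ^ 3 - x * (y ^ 2 + 1) ^ 2 := by
  simp only [f19]; ring

lemma dist_snd (c y : ℝ) (hy : 0 < y) : dist ((c, y) : ℝ × ℝ) (c, 0) = y := by
  rw [Prod.dist_eq, Real.dist_eq, Real.dist_eq]
  simp [abs_of_pos hy]; linarith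

lemma dist_fst (c x : ℝ) (hx : 0 < x) : dist ((c + x, 0) : ℝ × ℝ) (c, 0) = x := by
  rw [Prod.dist_eq, Real.dist_eq, Real.dist_eq]
  simp [abs_of_pos hx]; linarith

lemma dist_fst' (c x : ℝ) (hx : 0 < x) : dist ((c - x, 0) : ℝ × ℝ) (c, 0) = x := by
  rw [Prod.dist_eq, Real.dist_eq, Real.dist_eq]
  simp [abs_of_pos hx, abs_of_neg (by linarith : c - x - c < 0)]
  linarith

lemma not_locMin_pos (c : ℝ) (hc : 0 < c) : ¬ IsLocMin f19 (c, 0) := by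
  intro h
  rw [IsLocMin, IsLocalMin, IsMinFilter, Metric.eventually_nhds_iff] at h
  obtain ⟨ε, hε, hball⟩ := h
  have hy : (0:ℝ) < ε / 2 := by linarith
  have hylt : dist ((c, ε / 2) : ℝ × ℝ) (c, 0) < ε := by rw [dist_snd c _ hy]; linarith
  have := hball hylt
  simp only [f19_eval] at this
  nlinarith [mul_pos hc (mul_pos hy hy), sq_nonneg (ε / 2), mul_pos hc hy]

lemma not_locMax_neg (c : ℝ) (hc : c < 0) : ¬ IsLocMax f19 (c, 0) := by
  intro h
  rw [IsLocMax, IsLocalMax, IsMaxFilter, Metric.eventually_nhds_iff] at h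
  obtain ⟨ε, hε, hball⟩ := h
  have hy : (0:ℝ) < ε / 2 := by linarith
  have hylt : dist ((c, ε / 2) : ℝ × ℝ) (c, 0) < ε := by rw [dist_snd c _ hy]; linarith
  have := hball hylt
  simp only [f19_eval] at this
  nlinarith [mul_pos (neg_pos.mpr hc) (mul_pos hy hy), sq_nonneg (ε / 2)]

lemma not_locMax_pos (c : ℝ) (hc : 0 < c) (h3 : 3 * c ^ 2 = 1) : ¬ IsLocMax f19 (c, 0) := by
  intro h
  rw [IsLocMax, IsLocalMax, IsMaxFilter, Metric.eventually_nhds_iff] at h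
  obtain ⟨ε, hε, hball⟩ := h
  have hy : (0:ℝ) < ε / 2 := by linarith
  have hxlt : dist ((c + ε / 2, 0) : ℝ × ℝ) (c, 0) < ε := by rw [dist_fst c _ hy]; linarith
  have := hball hxlt
  simp only [f19_eval] at this
  nlinarith [mul_pos (mul_pos hc hy) hy, mul_pos (mul_pos hy hy) hy]

lemma not_locMin_neg (c : ℝ) (hc : c < 0) (h3 : 3 * c ^ 2 = 1) : ¬ IsLocMin f19 (c, 0) := by
  intro h
  rw [IsLocMin, IsLocalMin, IsMinFilter, Metric.eventually_nhds_iff] at h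
  obtain ⟨ε, hε, hball⟩ := h
  have hy : (0:ℝ) < ε / 2 := by linarith
  have hxlt : dist ((c - ε / 2, 0) : ℝ × ℝ) (c, 0) < ε := by rw [dist_fst' c _ hy]; linarith
  have := hball hxlt
  simp only [f19_eval] at this
  nlinarith [mul_pos (mul_pos (neg_pos.mpr hc) hy) hy, mul_pos (mul_pos hy hy) hy]


/-- The polynomial `x(x − y² − 1)(x + y² + 1)` has only nondegenerate critical points,
and it has exactly two critical points, namely `(1/√3, 0)` and `(−1/√3, 0)`, both of
which are saddles. -/
theorem morse_data_f19 :
    (∀ p : ℝ × ℝ, IsCriticalPt f19 p → hessDet f19 p ≠ 0) ∧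
    {p : ℝ × ℝ | IsCriticalPt f19 p} =
      {(1 / Real.sqrt 3, 0), (-(1 / Real.sqrt 3), 0)} ∧
    IsSaddle f19 (1 / Real.sqrt 3, 0) ∧
    IsSaddle f19 (-(1 / Real.sqrt 3), 0) := by
  have hc2 := c_sq
  have hcpos := c_pos
  have h3 : 3 * (1 / Real.sqrt 3) ^ 2 = 1 := by rw [hc2]; norm_num
  have hcrit : ∀ c : ℝ, 3 * c ^ 2 = 1 → IsCriticalPt f19 (c, 0) := by
    intro c hc
    rw [crit_iff_s19]
    constructor
    · simp only; nlinarith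
    · simp
  constructor
  · intro p hp
    have hp' : p ∈ {p : ℝ × ℝ | IsCriticalPt f19 p} := hp
    rw [crit_set] at hp'
    have hdet : ∀ c : ℝ, 3 * c ^ 2 = 1 → hessDet f19 (c, 0) ≠ 0 := by
      intro c hc
      unfold hessDet
      simp only
      rw [fxx_deriv, fyy_deriv, fxy_deriv]
      have : c ≠ 0 := by intro h; rw [h] at hc; norm_num at hc
      have : c ^ 2 > 0 := by positivity
      nlinarith
    rcases hp' with h | h <;> rw [h]
    · exact hdet _ h3
    · exact hdet _ (by nlinarith)
  refine ⟨crit_set, ⟨hcrit _ h3, not_locMin_pos _ hcpos, not_locMax_pos _ hcpos h3⟩,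
    ⟨hcrit _ (by nlinarith), not_locMin_neg _ (by linarith) (by nlinarith),
      not_locMax_neg _ (by linarith)⟩⟩
end
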